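/- (Lemma 4.2(i)) If αA_low ≤ α ≤ αA_high, then the map (z,γ) ↦ H(α,z,γ) attains its global maximum over ℝ² at the point (z*(α), 0), i.e. H(α,z,γ) ≤ H(α, z*(α), 0) for all z, γ ∈ ℝ. -/

import Mathlib

/-!
For `α` in the ambiguity interval, `inf_{α'} α' γ / 2 ≤ α γ / 2`, so the ambiguity terms
`-α γ / 2 + inf_{α'} α' γ / 2` of `H` are nonpositive and vanish at `γ = 0`. At `γ = 0`, `H` is a
concave quadratic in `z`, maximised at `z*(α)` by completing the square.
-/

/-- The map `H(α,z,γ)` of Section 4, with quadratic cost `k(a) = k a²/2`. -/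
noncomputable def Hfun (R_A R_P k αAlow αAhigh : ℝ) (α z γ : ℝ) : ℝ :=
  z / k - z ^ 2 / (2 * k) - α / 2 * (R_A * z ^ 2 + R_P * (1 - z) ^ 2) - α / 2 * γ
    + sInf ((fun α' => α' * γ / 2) '' Set.Icc αAlow αAhigh)

/-- The optimal sensitivity `z*(α)`. -/
noncomputable def zStar (R_A R_P k α : ℝ) : ℝ :=
  (1 + k * α * R_P) / (1 + α * k * (R_A + R_P))

open Set

section

variable {R_A R_P k αAlow αAhigh α : ℝ}

lemma Hfun_le_Hfun_zero (hα : α ∈ Icc αAlow αAhigh) (z γ : ℝ) :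
    Hfun R_A R_P k αAlow αAhigh α z γ ≤ Hfun R_A R_P k αAlow αAhigh α z 0 := by
  have hinf : sInf ((fun α' => α' * γ / 2) '' Icc αAlow αAhigh) ≤ α * γ / 2 :=
    csInf_le (isCompact_Icc.image (by fun_prop)).bddBelow (mem_image_of_mem _ hα)
  have hinf_zero : sInf ((fun α' => α' * (0 : ℝ) / 2) '' Icc αAlow αAhigh) = 0 := by
    simp only [mul_zero, zero_div, (nonempty_of_mem hα).image_const, csInf_singleton]
  simp only [Hfun, hinf_zero]
  linarith

lemma Hfun_zStar_sub_Hfun (hk : k ≠ 0) (hD : 1 + α * k * (R_A + R_P) ≠ 0) (z : ℝ) :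
    Hfun R_A R_P k αAlow αAhigh α (zStar R_A R_P k α) 0 - Hfun R_A R_P k αAlow αAhigh α z 0
      = (1 + α * k * (R_A + R_P)) / (2 * k) * (z - zStar R_A R_P k α) ^ 2 := by
  simp only [Hfun, zStar]
  set D := 1 + α * k * (R_A + R_P) with hD_def
  field_simp
  rw [hD_def]
  ring

end

theorem H_max_inside_general (R_A R_P k αAlow αAhigh : ℝ)
    (hRA : 0 < R_A) (hRP : 0 < R_P) (hk : 0 < k)
    (hlow : 0 < αAlow)
    (α : ℝ) (hα₁ : αAlow ≤ α) (hα₂ : α ≤ αAhigh) :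
    ∀ z γ : ℝ, Hfun R_A R_P k αAlow αAhigh α z γ
      ≤ Hfun R_A R_P k αAlow αAhigh α (zStar R_A R_P k α) 0 := by
  intro z γ
  have hα : 0 < α := hlow.trans_le hα₁
  have hD : 0 < 1 + α * k * (R_A + R_P) := by positivity
  calc Hfun R_A R_P k αAlow αAhigh α z γ
      ≤ Hfun R_A R_P k αAlow αAhigh α z 0 := Hfun_le_Hfun_zero ⟨hα₁, hα₂⟩ z γ
    _ ≤ Hfun R_A R_P k αAlow αAhigh α (zStar R_A R_P k α) 0 := by
      rw [← sub_nonneg, Hfun_zStar_sub_Hfun hk.ne' hD.ne' z]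
      positivity

/-- Lemma 4.2(i): if `αA_low ≤ α ≤ αA_high`, then `(z,γ) ↦ H(α,z,γ)` attains its
global maximum at `(z*(α), 0)`. -/
theorem H_max_inside (R_A R_P k αAlow αAhigh : ℝ)
    (hRA : 0 < R_A) (hRP : 0 < R_P) (hk : 0 < k)
    (hlow : 0 < αAlow) (hle : αAlow ≤ αAhigh)
    (α : ℝ) (hα₁ : αAlow ≤ α) (hα₂ : α ≤ αAhigh) :
    ∀ z γ : ℝ, Hfun R_A R_P k αAlow αAhigh α z γ
      ≤ Hfun R_A R_P k αAlow αAhigh α (zStar R_A R_P k α) 0 :=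
  H_max_inside_general R_A R_P k αAlow αAhigh hRA hRP hk hlow α hα₁ hα₂
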